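/- arXiv:1703.06075 — 2 statements merged into one kernel-verified Lean document; each statement's English description precedes it below -/
import Mathlib

section
/- Let m, n, q be positive integers with n odd and q even. Then the series Σ_{k=1}^{∞} ( Π_{j=1}^{m−1} L_{nk+jnq} ) / ( Π_{j=0}^{m} F_{nk+jnq} ) converges, and its sum equals (1 / (2 F_{mnq})) · Σ_{k=1}^{q} (−1)^{k} Π_{j=0}^{m−1} ( L_{nk+jnq} / F_{nk+jnq} ). -/
/-!
Write `r i = L_i / F_i`. Binet's formulas give `L_a F_{a+d} - F_a L_{a+d} = 2 (-1)^a F_d`, so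
`r a - r (a + d) = 2 (-1)^a F_d / (F_a F_{a+d})`. With `x_j = nk + jnq` and
`G k = ∏_{j<m} r (x_j)` (`lucasRatioProd`) this turns the `k`-th term into
`(-1)^k / (2 F_{mnq}) · (G k - G (k + q))`, because
`G k - G (k + q) = (∏_{0<j<m} r (x_j)) (r x_0 - r x_m)` and `(-1)^{nk} = (-1)^{k+q} = (-1)^k`.
The partial sums telescope with period `q` to the stated value minus a window of `q` consecutive
terms `(-1)^k G k`; since `r i = √5 + 2 ψ^i / F_i → √5`, `G` converges and the window, an
alternating sum of even length, tends to `0`.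
-/

open Filter Topology

def lucas : ℕ → ℕ
  | 0 => 2
  | 1 => 1
  | n + 2 => lucas (n + 1) + lucas n

open Real goldenRatio

namespace Finset

@[to_additive sum_Icc_one_eq_sum_range]
theorem prod_Icc_one_eq_prod_range {M : Type*} [CommMonoid M] (f : ℕ → M) (n : ℕ) :
    ∏ k ∈ Icc 1 n, f k = ∏ k ∈ range n, f (k + 1) := by
  rw [range_eq_Ico, prod_Ico_add', ← Ico_add_one_right_eq_Icc]

theorem sum_range_sub_shift {G : Type*} [AddCommGroup G] (f : ℕ → G) (q N : ℕ) :
    ∑ k ∈ range N, (f k - f (k + q)) = ∑ k ∈ range q, f k - ∑ k ∈ range q, f (N + k) := by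
  induction N with
  | zero => simp
  | succ N ih =>
    have window : ∑ k ∈ range q, f (N + 1 + k) = ∑ k ∈ range q, f (N + k) + f (N + q) - f N := by
      rw [← sum_range_succ (fun k => f (N + k)), sum_range_succ', add_zero, add_sub_cancel_right]
      simp only [Nat.add_right_comm N 1, add_assoc]
    rw [sum_range_succ, ih, window]
    abel

end Finset

theorem tendsto_sum_range_sub_shift {G : Type*} [AddCommGroup G] [TopologicalSpace G]
    [IsTopologicalAddGroup G] {f : ℕ → G} {q : ℕ}
    (h : Tendsto (fun N => ∑ k ∈ Finset.range q, f (N + k)) atTop (𝓝 0)) :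
    Tendsto (fun N => ∑ k ∈ Finset.range N, (f k - f (k + q))) atTop
      (𝓝 (∑ k ∈ Finset.range q, f k)) := by
  simp only [Finset.sum_range_sub_shift]
  simpa using tendsto_const_nhds.sub h

theorem tendsto_sum_range_neg_one_pow_mul_of_even {𝕜 : Type*} [NormedField 𝕜] {G : ℕ → 𝕜}
    {C : 𝕜} (hG : Tendsto G atTop (𝓝 C)) {q : ℕ} (hq : Even q) :
    Tendsto (fun N => ∑ k ∈ Finset.range q, (-1) ^ (N + k) * G (N + k)) atTop (𝓝 0) := by
  have hsum : Tendsto (fun N => ∑ k ∈ Finset.range q, (-1) ^ k * G (N + k)) atTop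
      (𝓝 (∑ k ∈ Finset.range q, (-1) ^ k * C)) :=
    tendsto_finsetSum _ fun k _ => (hG.comp (tendsto_add_atTop_nat k)).const_mul _
  rw [← Finset.sum_mul, neg_one_geom_sum, if_pos hq, zero_mul] at hsum
  rw [tendsto_zero_iff_norm_tendsto_zero] at hsum ⊢
  simpa [pow_add, mul_assoc, ← Finset.mul_sum] using hsum

theorem coe_lucas_eq (n : ℕ) : (lucas n : ℝ) = φ ^ n + ψ ^ n := by
  induction n using Nat.twoStepInduction with
  | zero => norm_num [lucas]
  | one => simp [lucas, goldenRatio_add_goldenConj]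
  | more n ih₀ ih₁ =>
    push_cast [lucas, ih₀, ih₁]
    linear_combination (-φ ^ n) * goldenRatio_sq - ψ ^ n * goldenConj_sq

theorem coe_lucas_eq_sqrt_five_mul_fib_add (n : ℕ) :
    (lucas n : ℝ) = √5 * Nat.fib n + 2 * ψ ^ n := by
  rw [coe_lucas_eq, coe_fib_eq]
  field_simp
  ring

theorem lucas_mul_fib_add_sub_fib_mul_lucas_add (a d : ℕ) :
    (lucas a : ℝ) * Nat.fib (a + d) - Nat.fib a * lucas (a + d) = 2 * (-1) ^ a * Nat.fib d := by
  rw [coe_lucas_eq, coe_lucas_eq, coe_fib_eq, coe_fib_eq, coe_fib_eq,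
    ← goldenRatio_mul_goldenConj, mul_pow, pow_add, pow_add]
  ring

theorem lucas_div_fib_sub_lucas_div_fib_add {a : ℕ} (ha : 0 < a) (d : ℕ) :
    (lucas a : ℝ) / Nat.fib a - lucas (a + d) / Nat.fib (a + d) =
      2 * (-1) ^ a * Nat.fib d / (Nat.fib a * Nat.fib (a + d)) := by
  have hfib : ∀ {i}, 0 < i → (Nat.fib i : ℝ) ≠ 0 := fun hi => by positivity [Nat.fib_pos.2 hi]
  rw [div_sub_div _ _ (hfib ha) (hfib (by omega)), lucas_mul_fib_add_sub_fib_mul_lucas_add]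

theorem tendsto_lucas_div_fib_atTop :
    Tendsto (fun n => (lucas n : ℝ) / Nat.fib n) atTop (𝓝 √5) := by
  have hψ : Tendsto (fun n => ψ ^ n) atTop (𝓝 0) :=
    tendsto_pow_atTop_nhds_zero_of_abs_lt_one <|
      abs_lt.2 ⟨neg_one_lt_goldenConj, goldenConj_neg.trans one_pos⟩
  have hfib : Tendsto (fun n => (Nat.fib n : ℝ)) atTop atTop :=
    tendsto_natCast_atTop_atTop.comp <|
      (tendsto_add_atTop_iff_nat 2).1 Nat.fib_add_two_strictMono.tendsto_atTop
  have hlim := tendsto_const_nhds (x := √5) |>.add (hψ.const_mul 2 |>.div_atTop hfib)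
  rw [add_zero] at hlim
  refine hlim.congr' ?_
  filter_upwards [eventually_gt_atTop 0] with n hn
  have : (Nat.fib n : ℝ) ≠ 0 := by positivity [Nat.fib_pos.2 hn]
  rw [coe_lucas_eq_sqrt_five_mul_fib_add]
  field_simp

theorem prod_lucas_div_fib_sub_prod_lucas_div_fib_add {a : ℕ} (ha : 0 < a) (d m : ℕ) :
    ∏ j ∈ Finset.range m, (lucas (a + j * d) : ℝ) / Nat.fib (a + j * d) -
        ∏ j ∈ Finset.range m, (lucas (a + d + j * d) : ℝ) / Nat.fib (a + d + j * d) =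
      2 * (-1) ^ a * Nat.fib (m * d) *
        ((∏ j ∈ Finset.Icc 1 (m - 1), (lucas (a + j * d) : ℝ)) /
          ∏ j ∈ Finset.range (m + 1), (Nat.fib (a + j * d) : ℝ)) := by
  rcases m with _ | m
  · simp
  set L : ℕ → ℝ := fun j => lucas (a + j * d)
  set F : ℕ → ℝ := fun j => Nat.fib (a + j * d)
  have hF : ∀ j, F j ≠ 0 := fun j => by positivity [Nat.fib_pos.2 (by omega : 0 < a + j * d)]
  have hshift : ∀ j, a + d + j * d = a + (j + 1) * d := fun j => by ring
  have hends : L 0 / F 0 - L (m + 1) / F (m + 1) =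
      2 * (-1) ^ a * Nat.fib ((m + 1) * d) / (F 0 * F (m + 1)) := by
    simpa [L, F] using lucas_div_fib_sub_lucas_div_fib_add ha ((m + 1) * d)
  simp only [hshift, Nat.add_sub_cancel, Finset.prod_Icc_one_eq_prod_range]
  rw [Finset.prod_range_succ' (fun j => L j / F j),
    Finset.prod_range_succ (fun j => L (j + 1) / F (j + 1)), Finset.prod_range_succ' F,
    Finset.prod_range_succ (fun j => F (j + 1)), ← mul_sub, hends, Finset.prod_div_distrib]
  have hprod : ∏ j ∈ Finset.range m, F (j + 1) ≠ 0 := Finset.prod_ne_zero_iff.2 fun j _ => hF _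
  field_simp

noncomputable def lucasRatioProd (m n q k : ℕ) : ℝ :=
  ∏ j ∈ Finset.range m, (lucas (n * k + j * n * q) : ℝ) / Nat.fib (n * k + j * n * q)

theorem tendsto_lucasRatioProd_atTop (m q : ℕ) {n : ℕ} (hn : 0 < n) :
    Tendsto (lucasRatioProd m n q) atTop (𝓝 (√5 ^ m)) := by
  have h := tendsto_finsetProd (Finset.range m) fun j _ =>
    tendsto_lucas_div_fib_atTop.comp <| (tendsto_add_atTop_nat (j * n * q)).comp <|
      tendsto_id.const_mul_atTop' hn
  rwa [Finset.prod_const, Finset.card_range] at h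

theorem prod_lucas_div_prod_fib_eq_mul_sub {m n q k : ℕ} (hm : 0 < m) (hq : 0 < q)
    (hn : Odd n) (hqe : Even q) (hk : 0 < k) :
    (∏ j ∈ Finset.Icc 1 (m - 1), (lucas (n * k + j * n * q) : ℝ)) /
        ∏ j ∈ Finset.range (m + 1), (Nat.fib (n * k + j * n * q) : ℝ) =
      1 / (2 * Nat.fib (m * n * q)) * ((-1) ^ k * lucasRatioProd m n q k -
        (-1) ^ (k + q) * lucasRatioProd m n q (k + q)) := by
  set T := (∏ j ∈ Finset.Icc 1 (m - 1), (lucas (n * k + j * n * q) : ℝ)) /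
    ∏ j ∈ Finset.range (m + 1), (Nat.fib (n * k + j * n * q) : ℝ)
  have h := prod_lucas_div_fib_sub_prod_lucas_div_fib_add (by positivity [hn.pos] : 0 < n * k)
    (n * q) m
  have hshift : ∀ j, n * k + n * q + j * n * q = n * (k + q) + j * n * q := fun j => by ring
  simp only [← mul_assoc, hshift] at h
  rw [pow_mul, hn.neg_one_pow] at h
  have hfib : (Nat.fib (m * n * q) : ℝ) ≠ 0 := by
    positivity [Nat.fib_pos.2 (by positivity [hn.pos] : 0 < m * n * q)]
  have hsign : ((-1 : ℝ) ^ k) ^ 2 = 1 := by rw [← pow_mul, pow_mul', neg_one_sq, one_pow]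
  rw [pow_add, hqe.neg_one_pow, mul_one, ← mul_sub, lucasRatioProd, lucasRatioProd, h]
  field_simp
  linear_combination (-T) * hsign

theorem stmt_4_general (m n q : ℕ) (hm : 0 < m) (hq : 0 < q)
    (hnodd : Odd n) (hqeven : Even q) :
    Tendsto (fun N => ∑ k ∈ Finset.Icc 1 N,
        (∏ j ∈ Finset.Icc 1 (m - 1), (lucas (n * k + j * n * q) : ℝ)) /
          ∏ j ∈ Finset.range (m + 1), (Nat.fib (n * k + j * n * q) : ℝ))
      atTop
      (𝓝 ((1 / (2 * (Nat.fib (m * n * q) : ℝ))) *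
        ∑ k ∈ Finset.Icc 1 q, (-1 : ℝ) ^ k * ∏ j ∈ Finset.range m,
          (lucas (n * k + j * n * q) : ℝ) / (Nat.fib (n * k + j * n * q) : ℝ))) := by
  set G := lucasRatioProd m n q
  have hterm := fun k : ℕ => prod_lucas_div_prod_fib_eq_mul_sub hm hq hnodd hqeven k.succ_pos
  simp only [Finset.sum_Icc_one_eq_sum_range, hterm, ← Finset.mul_sum, Nat.add_right_comm _ 1 q]
  have hwindow : Tendsto (fun N => ∑ k ∈ Finset.range q, (-1) ^ (N + k + 1) * G (N + k + 1))
      atTop (𝓝 0) := by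
    simpa only [Nat.add_right_comm _ 1] using (tendsto_add_atTop_iff_nat 1).2 <|
      tendsto_sum_range_neg_one_pow_mul_of_even (tendsto_lucasRatioProd_atTop m q hnodd.pos)
        hqeven
  exact (tendsto_sum_range_sub_shift (f := fun k => (-1) ^ (k + 1) * G (k + 1)) hwindow).const_mul
    _

/-- Theorem (`n` odd, `q` even):
`Σ_{k=1}^{∞} (Π_{j=1}^{m−1} L_{nk+jnq}) / (Π_{j=0}^{m} F_{nk+jnq})
  = (1/(2F_{mnq})) Σ_{k=1}^{q} (−1)^k Π_{j=0}^{m−1} L_{nk+jnq}/F_{nk+jnq}`. -/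
theorem stmt_4 (m n q : ℕ) (hm : 0 < m) (hn : 0 < n) (hq : 0 < q)
    (hnodd : Odd n) (hqeven : Even q) :
    Tendsto (fun N => ∑ k ∈ Finset.Icc 1 N,
        (∏ j ∈ Finset.Icc 1 (m - 1), (lucas (n * k + j * n * q) : ℝ)) /
          ∏ j ∈ Finset.range (m + 1), (Nat.fib (n * k + j * n * q) : ℝ))
      atTop
      (𝓝 ((1 / (2 * (Nat.fib (m * n * q) : ℝ))) *
        ∑ k ∈ Finset.Icc 1 q, (-1 : ℝ) ^ k * ∏ j ∈ Finset.range m,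
          (lucas (n * k + j * n * q) : ℝ) / (Nat.fib (n * k + j * n * q) : ℝ))) :=
  stmt_4_general m n q hm hq hnodd hqeven
end

section
/- Let m, n, q, p be positive integers with n odd and q even. Then the series Σ_{k=1}^{∞} ( Π_{j=1}^{m−1} F_{nk+jnq+np} ) / ( Π_{j=0}^{m} F_{nk+jnq} ) converges, and its sum equals (1 / (F_{mnq}·F_{np})) · Σ_{k=1}^{q} (−1)^{k} Π_{j=0}^{m−1} ( F_{nk+jnq+np} / F_{nk+jnq} ). -/
/-!
Put `a_k = ∏_{j<m} F_{nk+jnq+np} / F_{nk+jnq}`. Vajda's identity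
`F_{x+b} F_{x+c} - F_x F_{x+b+c} = (-1)^x F_b F_c`, applied to the two factors in which `a_k` and
`a_{k+q}` differ, shows that for `n` odd and `q` even the `k`-th term of the series is
`((-1)^k a_k - (-1)^{k+q} a_{k+q}) / (F_{mnq} F_{np})`. The partial sums telescope to the first `q`
values of `(-1)^k a_k` minus `q` consecutive ones far out; as `a_k → φ^{mnp}` and `q` is even, the
latter cancel in the limit.
-/

open Filter Topology Finset Real
open scoped goldenRatio

@[to_additive sum_Icc_one_eq_sum_range]
theorem Finset.prod_Icc_one_eq_prod_range_s9 {M : Type*} [CommMonoid M] (f : ℕ → M) (N : ℕ) :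
    ∏ k ∈ Icc 1 N, f k = ∏ i ∈ range N, f (i + 1) := by
  rw [range_eq_Ico, prod_Ico_add' f, ← Ico_add_one_right_eq_Icc]

theorem Finset.sum_range_sub_sum_range_shift {M : Type*} [AddCommGroup M] (f : ℕ → M) (q N : ℕ) :
    ∑ k ∈ range N, (f k - f (k + q)) = ∑ k ∈ range q, f k - ∑ k ∈ range q, f (N + k) := by
  have h₁ := sum_range_add f N q
  have h₂ := sum_range_add f q N
  simp_rw [sum_sub_distrib, add_comm _ q]
  rw [add_comm q N] at h₂
  rw [sub_eq_sub_iff_add_eq_add, ← h₁, h₂, add_comm]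

theorem tendsto_sum_range_neg_one_pow_mul {R : Type*} [NormedDivisionRing R]
    {a : ℕ → R} {L : R} (ha : Tendsto a atTop (𝓝 L)) {q : ℕ} (hq : Even q) :
    Tendsto (fun N => ∑ i ∈ range q, (-1) ^ (N + i) * a (N + i)) atTop (𝓝 0) := by
  have hinner : Tendsto (fun N => ∑ i ∈ range q, (-1) ^ i * a (N + i)) atTop (𝓝 0) := by
    have := tendsto_finsetSum (range q) fun i _ =>
      (ha.comp (tendsto_add_atTop_nat i)).const_mul ((-1 : R) ^ i)
    rwa [← sum_mul, neg_one_geom_sum, if_pos hq, zero_mul] at this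
  simp_rw [pow_add, mul_assoc, ← mul_sum]
  rw [tendsto_zero_iff_norm_tendsto_zero] at hinner ⊢
  simpa only [norm_mul, norm_pow, norm_neg, norm_one, one_pow, one_mul] using hinner

theorem fib_add_mul_fib_add_sub_fib_mul_fib_add_add (a b c : ℕ) :
    (Nat.fib (a + b) : ℝ) * Nat.fib (a + c) - Nat.fib a * Nat.fib (a + b + c) =
      (-1) ^ a * Nat.fib b * Nat.fib c := by
  have hneg : (-1 : ℝ) ^ a = (φ * ψ) ^ a := by rw [goldenRatio_mul_goldenConj]
  simp only [coe_fib_eq, hneg, mul_pow, pow_add]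
  field_simp
  ring

theorem tendsto_fib_add_div_fib (c : ℕ) :
    Tendsto (fun n => (Nat.fib (n + c) : ℝ) / Nat.fib n) atTop (𝓝 (φ ^ c)) := by
  induction c with
  | zero =>
    refine tendsto_const_nhds.congr' ?_
    filter_upwards [eventually_ge_atTop 1] with n hn
    rw [pow_zero, add_zero, div_self (mod_cast (Nat.fib_pos.mpr hn).ne')]
  | succ c ih =>
    have hstep := (tendsto_fib_succ_div_fib_atTop.comp (tendsto_add_atTop_nat c)).mul ih
    rw [← pow_succ'] at hstep
    refine hstep.congr' ?_
    filter_upwards [eventually_ge_atTop 1] with n hn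
    have : (Nat.fib (n + c) : ℝ) ≠ 0 := mod_cast (Nat.fib_pos.mpr (by omega)).ne'
    simp only [Function.comp_apply, ← add_assoc]
    field_simp

noncomputable def fibRatioProd (m n q p k : ℕ) : ℝ :=
  ∏ j ∈ range m, (Nat.fib (n * k + j * n * q + n * p) : ℝ) / Nat.fib (n * k + j * n * q)

theorem tendsto_fibRatioProd {n : ℕ} (hn : 0 < n) (m q p : ℕ) :
    Tendsto (fibRatioProd m n q p) atTop (𝓝 ((φ ^ (n * p)) ^ m)) := by
  have := tendsto_finsetProd (range m) fun j _ => (tendsto_fib_add_div_fib (n * p)).comp <|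
    tendsto_atTop_mono
      (fun k => (Nat.le_mul_of_pos_left k hn).trans (Nat.le_add_right _ (j * n * q))) tendsto_id
  rwa [prod_const, card_range] at this

noncomputable def fibSeriesTerm (m n q p k : ℕ) : ℝ :=
  (∏ j ∈ Icc 1 (m - 1), (Nat.fib (n * k + j * n * q + n * p) : ℝ)) /
    ∏ j ∈ range (m + 1), (Nat.fib (n * k + j * n * q) : ℝ)

theorem fibRatioProd_sub_fibRatioProd_add {m n q p k : ℕ} (hm : 0 < m) (hnk : 0 < n * k) :
    fibRatioProd m n q p k - fibRatioProd m n q p (k + q) =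
      (-1) ^ (n * k) * (Nat.fib (m * n * q) * Nat.fib (n * p)) * fibSeriesTerm m n q p k := by
  obtain ⟨m, rfl⟩ := Nat.exists_eq_add_one_of_ne_zero hm.ne'
  set u : ℕ → ℝ := fun j => Nat.fib (n * k + j * n * q)
  set v : ℕ → ℝ := fun j => Nat.fib (n * k + j * n * q + n * p)
  have hu : ∀ j, u j ≠ 0 := fun j => by
    simp only [u]; exact_mod_cast (Nat.fib_pos.mpr (by omega)).ne'
  have hshift : fibRatioProd (m + 1) n q p (k + q) = ∏ j ∈ range (m + 1), v (j + 1) / u (j + 1) :=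
    prod_congr rfl fun j _ => by simp only [u, v]; ring_nf
  have hvajda : u (m + 1) * v 0 - u 0 * v (m + 1) =
      (-1) ^ (n * k) * Nat.fib ((m + 1) * n * q) * Nat.fib (n * p) := by
    simpa [u, v] using fib_add_mul_fib_add_sub_fib_mul_fib_add_add (n * k) ((m + 1) * n * q) (n * p)
  rw [fibSeriesTerm, Nat.add_sub_cancel]
  change _ = _ * ((∏ j ∈ Icc 1 m, v j) / ∏ j ∈ range (m + 1 + 1), u j)
  rw [fibRatioProd, hshift, prod_range_succ' (fun j => v j / u j),
    prod_range_succ (fun j => v (j + 1) / u (j + 1)), prod_Icc_one_eq_prod_range_s9, prod_range_succ,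
    prod_range_succ' u, prod_div_distrib]
  have := prod_ne_zero_iff.mpr fun j (_ : j ∈ range m) => hu (j + 1)
  have := hu 0
  have := hu (m + 1)
  field_simp
  linear_combination (∏ j ∈ range m, v (j + 1)) * hvajda

theorem mul_fibSeriesTerm_eq {m n q p k : ℕ} (hm : 0 < m) (hn : Odd n) (hq : Even q) (hk : 0 < k) :
    Nat.fib (m * n * q) * Nat.fib (n * p) * fibSeriesTerm m n q p k =
      (-1) ^ k * fibRatioProd m n q p k - (-1) ^ (k + q) * fibRatioProd m n q p (k + q) := by
  rw [pow_add, hq.neg_one_pow, mul_one, ← mul_sub,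
    fibRatioProd_sub_fibRatioProd_add hm (Nat.mul_pos hn.pos hk), pow_mul, hn.neg_one_pow,
    ← mul_assoc, ← mul_assoc, ← pow_add, Even.neg_one_pow ⟨k, rfl⟩, one_mul]

theorem stmt_9_general (m n q p : ℕ) (hm : 0 < m) (hq : 0 < q) (hp : 0 < p)
    (hnodd : Odd n) (hqeven : Even q) :
    Tendsto (fun N => ∑ k ∈ Finset.Icc 1 N,
        (∏ j ∈ Finset.Icc 1 (m - 1), (Nat.fib (n * k + j * n * q + n * p) : ℝ)) /
          ∏ j ∈ Finset.range (m + 1), (Nat.fib (n * k + j * n * q) : ℝ))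
      atTop
      (𝓝 ((1 / ((Nat.fib (m * n * q) : ℝ) * (Nat.fib (n * p) : ℝ))) *
        ∑ k ∈ Finset.Icc 1 q, (-1 : ℝ) ^ k * ∏ j ∈ Finset.range m,
          (Nat.fib (n * k + j * n * q + n * p) : ℝ) / (Nat.fib (n * k + j * n * q) : ℝ))) := by
  have hn := hnodd.pos
  set D : ℝ := Nat.fib (m * n * q) * Nat.fib (n * p)
  have hD : D ≠ 0 := mul_ne_zero (mod_cast (Nat.fib_pos.mpr (by positivity)).ne')
    (mod_cast (Nat.fib_pos.mpr (by positivity)).ne')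
  set b : ℕ → ℝ := fun k => (-1) ^ k * fibRatioProd m n q p k
  have hsum : ∀ N, ∑ k ∈ Icc 1 N, fibSeriesTerm m n q p k =
      (∑ i ∈ range q, b (i + 1) - ∑ i ∈ range q, b (N + i + 1)) / D := by
    intro N
    rw [eq_div_iff hD, sum_mul, sum_Icc_one_eq_sum_range,
      ← sum_range_sub_sum_range_shift fun i => b (i + 1)]
    refine sum_congr rfl fun k _ => ?_
    rw [mul_comm, mul_fibSeriesTerm_eq hm hnodd hqeven k.succ_pos, add_right_comm]
  have htail : Tendsto (fun N => ∑ i ∈ range q, b (N + i + 1)) atTop (𝓝 0) :=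
    ((tendsto_sum_range_neg_one_pow_mul (tendsto_fibRatioProd hn m q p) hqeven).comp
      (tendsto_add_atTop_nat 1)).congr fun N => by
        simp only [Function.comp_apply, b, add_right_comm N 1]
  have hlimit : 1 / D * ∑ k ∈ Icc 1 q, (-1 : ℝ) ^ k * fibRatioProd m n q p k =
      (∑ i ∈ range q, b (i + 1) - 0) / D := by
    rw [sum_Icc_one_eq_sum_range, sub_zero, one_div_mul_eq_div]
  have hlim := ((tendsto_const_nhds (x := ∑ i ∈ range q, b (i + 1))).sub htail).div_const D
  rwa [← hlimit, ← funext hsum] at hlim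

/-- Theorem (`n` odd, `q` even):
`Σ_{k=1}^{∞} (Π_{j=1}^{m−1} F_{nk+jnq+np}) / (Π_{j=0}^{m} F_{nk+jnq})
  = (1/(F_{mnq} F_{np})) Σ_{k=1}^{q} (−1)^k Π_{j=0}^{m−1} F_{nk+jnq+np}/F_{nk+jnq}`. -/
theorem stmt_9 (m n q p : ℕ) (hm : 0 < m) (hn : 0 < n) (hq : 0 < q) (hp : 0 < p)
    (hnodd : Odd n) (hqeven : Even q) :
    Tendsto (fun N => ∑ k ∈ Finset.Icc 1 N,
        (∏ j ∈ Finset.Icc 1 (m - 1), (Nat.fib (n * k + j * n * q + n * p) : ℝ)) /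
          ∏ j ∈ Finset.range (m + 1), (Nat.fib (n * k + j * n * q) : ℝ))
      atTop
      (𝓝 ((1 / ((Nat.fib (m * n * q) : ℝ) * (Nat.fib (n * p) : ℝ))) *
        ∑ k ∈ Finset.Icc 1 q, (-1 : ℝ) ^ k * ∏ j ∈ Finset.range m,
          (Nat.fib (n * k + j * n * q + n * p) : ℝ) / (Nat.fib (n * k + j * n * q) : ℝ))) :=
  stmt_9_general m n q p hm hq hp hnodd hqeven
end
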